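/- Let n ≤ m be integers and let U_n, …, U_m ⊂ ℂ be nonempty compact sets. Then A ∈ ΨE(U_n,…,U_m) if and only if σ^op(A) = M(U_n,…,U_m). -/

import Mathlib

noncomputable section
open Filter Complex Topology
open scoped ENNReal

/-- The Hilbert space ℓ²(ℤ). -/
abbrev HZ := lp (fun _ : ℤ => ℂ) 2

/-- The standard orthonormal basis of ℓ²(ℤ). -/
def eZ (i : ℤ) : HZ := lp.single 2 i 1

/-- Matrix entry `A_{i,j} = ⟨A e_j, e_i⟩` (inner product linear in the first slot,
here written in Mathlib's convention which is conjugate-linear in the first slot). -/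
def entry (A : HZ →L[ℂ] HZ) (i j : ℤ) : ℂ := inner ℂ (eZ i) (A (eZ j))

/-- The (closed) numerical range `N(A) = clos {⟨Ax,x⟩ : ‖x‖ = 1}`. -/
def numRange (A : HZ →L[ℂ] HZ) : Set ℂ :=
  closure {z | ∃ x : HZ, ‖x‖ = 1 ∧ (inner ℂ x (A x) : ℂ) = z}

/-- The numerical abscissa `r₀(A) = max {Re z : z ∈ N(A)}`. -/
def r0 (A : HZ →L[ℂ] HZ) : ℝ := sSup (Complex.re '' numRange A)

/-- The rotated numerical abscissa `r_φ(A) = max {Re z : z ∈ N(e^{iφ}A)}`. -/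
def rphi (φ : ℝ) (A : HZ →L[ℂ] HZ) : ℝ := r0 (Complex.exp (φ * Complex.I) • A)

lemma memShift (k : ℤ) (x : HZ) : Memℓp (fun j => x (j - k)) 2 := by
  have h := lp.memℓp x
  rw [memℓp_gen_iff (by norm_num)] at h ⊢
  simpa [Function.comp_def] using ((Equiv.subRight k).summable_iff (f := fun i => ‖x i‖ ^ (2:ℝ≥0∞).toReal)).mpr h

def shiftLM (k : ℤ) : HZ →ₗ[ℂ] HZ where
  toFun x := ⟨fun j => x (j - k), memShift k x⟩
  map_add' x y := by ext j; simp [lp.coeFn_add]; rfl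
  map_smul' c x := by ext j; simp [lp.coeFn_smul]

lemma shift_norm (k : ℤ) (x : HZ) : ‖shiftLM k x‖ = ‖x‖ := by
  rw [lp.norm_eq_tsum_rpow (by norm_num) x, lp.norm_eq_tsum_rpow (by norm_num) (shiftLM k x)]
  congr 1
  exact (Equiv.subRight k).tsum_eq (f := fun i => ‖x i‖ ^ (2:ℝ≥0∞).toReal)

/-- The shift operator `V_k` on ℓ²(ℤ), `(V_k x)_j = x_{j-k}`. -/
def Vshift (k : ℤ) : HZ →L[ℂ] HZ :=
  LinearIsometry.toContinuousLinearMap ⟨shiftLM k, shift_norm k⟩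

/-- `B` is a limit operator of `A`: there is a sequence of integers `h` with `|h m| → ∞`
such that `V_{-h_m} A V_{h_m} → B` strongly. -/
def IsLimOp (A B : HZ →L[ℂ] HZ) : Prop :=
  ∃ h : ℕ → ℤ, Tendsto (fun m => |h m|) atTop atTop ∧
    ∀ x : HZ, Tendsto (fun m => Vshift (-(h m)) (A (Vshift (h m) x))) atTop (𝓝 (B x))

/-- The operator spectrum: the set of all limit operators of `A`. -/
def opSpec (A : HZ →L[ℂ] HZ) : Set (HZ →L[ℂ] HZ) := {B | IsLimOp A B}

/-- A band operator: only finitely many diagonals are nonzero. -/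
def IsBandOp (A : HZ →L[ℂ] HZ) : Prop :=
  ∃ N : ℕ, ∀ i j : ℤ, (N : ℤ) < |i - j| → entry A i j = 0

/-- `M(U_n, …, U_m)`: the k-th diagonal has entries in `U k` for `n ≤ k ≤ m`,
and all other diagonals vanish. -/
def Mset (n m : ℤ) (U : ℤ → Set ℂ) : Set (HZ →L[ℂ] HZ) :=
  {A | ∀ i k : ℤ, (n ≤ k → k ≤ m → entry A (i + k) i ∈ U k) ∧
      (¬(n ≤ k ∧ k ≤ m) → entry A (i + k) i = 0)}

/-- The orthogonal projection `P_{k,l}` onto `span{e_k, …, e_l}`. -/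
def projIcc (k l : ℤ) : HZ →L[ℂ] HZ :=
  ∑ i ∈ Finset.Icc k l, (innerSL ℂ (eZ i)).smulRight (eZ i)

/-- The finite matrix `b` placed in `ℓ²(ℤ)` with rows/columns at positions `k, …, k+s`. -/
def embedMat (k : ℤ) (s : ℕ) (b : Fin (s+1) → Fin (s+1) → ℂ) : HZ →L[ℂ] HZ :=
  ∑ p : Fin (s+1), ∑ q : Fin (s+1),
    b p q • (innerSL ℂ (eZ (k + (q : ℤ)))).smulRight (eZ (k + (p : ℤ)))

/-- A finite square matrix whose k-th diagonal entries lie in `U k` for `n ≤ k ≤ m`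
and whose remaining entries vanish. -/
def finPattern (n m : ℤ) (U : ℤ → Set ℂ) (s : ℕ) (b : Fin (s+1) → Fin (s+1) → ℂ) : Prop :=
  ∀ p q : Fin (s+1), (n ≤ (p : ℤ) - (q : ℤ) → (p : ℤ) - (q : ℤ) ≤ m →
      b p q ∈ U ((p : ℤ) - (q : ℤ))) ∧
    (¬(n ≤ (p : ℤ) - (q : ℤ) ∧ (p : ℤ) - (q : ℤ) ≤ m) → b p q = 0)

/-- Pseudo-ergodic operators `ΨE(U_n, …, U_m)`. -/
def PsiE (n m : ℤ) (U : ℤ → Set ℂ) : Set (HZ →L[ℂ] HZ) :=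
  {A | A ∈ Mset n m U ∧ ∀ ε > (0:ℝ), ∀ (s : ℕ) (b : Fin (s+1) → Fin (s+1) → ℂ),
    finPattern n m U s b → ∃ k : ℤ,
      ‖projIcc k (k + s) ∘L A ∘L projIcc k (k + s) - embedMat k s b‖ ≤ ε}

/-- The essential spectrum: the set of `λ` such that `A - λI` is not Fredholm. -/
def essSpec (A : HZ →L[ℂ] HZ) : Set ℂ :=
  {lam | ¬(FiniteDimensional ℂ (LinearMap.ker ((A - lam • (1 : HZ →L[ℂ] HZ) : HZ →L[ℂ] HZ) : HZ →ₗ[ℂ] HZ)) ∧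
      FiniteDimensional ℂ ((LinearMap.range ((A - lam • (1 : HZ →L[ℂ] HZ) : HZ →L[ℂ] HZ) : HZ →ₗ[ℂ] HZ))ᗮ))}

/-- The Hilbert space ℓ²(ℕ). -/
abbrev HN := lp (fun _ : ℕ => ℂ) 2

def eN (i : ℕ) : HN := lp.single 2 i 1

def entryN (A : HN →L[ℂ] HN) (i j : ℕ) : ℂ := inner ℂ (eN i) (A (eN j))

def numRangeN (A : HN →L[ℂ] HN) : Set ℂ :=
  closure {z | ∃ x : HN, ‖x‖ = 1 ∧ (inner ℂ x (A x) : ℂ) = z}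

def r0N (A : HN →L[ℂ] HN) : ℝ := sSup (Complex.re '' numRangeN A)

/-!
Both inclusions are read off matrix entries. The entries of a limit operator are limits of
entries of `A` along a diagonal, so they stay in the closed sets `U k`: `σ^op(A) ⊆ M`.
For `B ∈ M`, pseudo-ergodicity puts near-copies of ever larger central blocks of `B` into `A`;
gluing a block of `B` to a far translate of itself forces such copies arbitrarily far out.
All operators involved are band operators on the same diagonals with uniformly bounded norms,
so entrywise convergence of the shifted copies of `A` to `B` is strong convergence.
Conversely, every finite pattern is the upper left block of some `B ∈ M` (a Laurent operator
corrected in finitely many entries), and `B` being a limit operator of `A` yields near-copies of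
that block in `A`.
-/

lemma eZ_apply (i j : ℤ) : eZ i j = if j = i then 1 else 0 := by
  simp [eZ, lp.single_apply, Pi.single_apply]

lemma inner_eZ_left (i : ℤ) (x : HZ) : inner ℂ (eZ i) x = x i := by
  simp [eZ, lp.inner_single_left]

lemma norm_eZ (i : ℤ) : ‖eZ i‖ = 1 := by
  simp [eZ, lp.norm_single]

lemma hasSum_eZ (x : HZ) : HasSum (fun i => x i • eZ i) x := by
  convert lp.hasSum_single (E := fun _ : ℤ => ℂ) ENNReal.ofNat_ne_top x using 2 with i
  simp [eZ, ← lp.single_smul]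

lemma entry_eq_apply (A : HZ →L[ℂ] HZ) (i j : ℤ) : entry A i j = A (eZ j) i :=
  inner_eZ_left i _

lemma entry_add (T S : HZ →L[ℂ] HZ) (i j : ℤ) :
    entry (T + S) i j = entry T i j + entry S i j :=
  inner_add_right _ _ _

lemma norm_entry_le (T : HZ →L[ℂ] HZ) (i j : ℤ) : ‖entry T i j‖ ≤ ‖T‖ :=
  calc ‖entry T i j‖ ≤ ‖eZ i‖ * ‖T (eZ j)‖ := norm_inner_le_norm _ _
    _ ≤ ‖T‖ := by simpa [norm_eZ] using T.le_opNorm (eZ j)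

lemma Vshift_eZ (k i : ℤ) : Vshift k (eZ i) = eZ (i + k) := by
  ext j
  change eZ i (j - k) = eZ (i + k) j
  rw [eZ_apply, eZ_apply]
  exact if_congr (by omega) rfl rfl

lemma norm_Vshift_le (k : ℤ) : ‖Vshift k‖ ≤ 1 :=
  LinearIsometry.norm_toContinuousLinearMap_le _

lemma entry_Vshift_conj (A : HZ →L[ℂ] HZ) (h i j : ℤ) :
    entry (Vshift (-h) ∘L A ∘L Vshift h) i j = entry A (h + i) (h + j) := by
  simp only [entry_eq_apply, ContinuousLinearMap.comp_apply, Vshift_eZ]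
  change A (eZ (j + h)) (i - -h) = _
  rw [sub_neg_eq_add, add_comm i, add_comm j]

lemma norm_Vshift_conj_le (A : HZ →L[ℂ] HZ) (h : ℤ) :
    ‖Vshift (-h) ∘L A ∘L Vshift h‖ ≤ ‖A‖ :=
  calc ‖Vshift (-h) ∘L A ∘L Vshift h‖ ≤ ‖Vshift (-h)‖ * (‖A‖ * ‖Vshift h‖) :=
        (ContinuousLinearMap.opNorm_comp_le _ _).trans (by gcongr; exact A.opNorm_comp_le _)
    _ ≤ 1 * (‖A‖ * 1) := by gcongr <;> exact norm_Vshift_le _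
    _ = ‖A‖ := by ring

lemma smulRight_eZ_apply (a b : ℤ) (x : HZ) :
    (innerSL ℂ (eZ b)).smulRight (eZ a) x = x b • eZ a := by
  simp [inner_eZ_left]

lemma norm_smulRight_eZ (a b : ℤ) : ‖(innerSL ℂ (eZ b)).smulRight (eZ a)‖ = 1 := by
  simp [ContinuousLinearMap.norm_smulRight_apply, norm_eZ]

def block (c : ℤ → ℤ → ℂ) (k : ℤ) (s : ℕ) : Fin (s+1) → Fin (s+1) → ℂ :=
  fun p q => c (k + p) (k + q)

lemma sum_Icc_eq_sum_fin {M : Type*} [AddCommMonoid M] (k : ℤ) (s : ℕ) (f : ℤ → M) :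
    ∑ i ∈ Finset.Icc k (k + s), f i = ∑ p : Fin (s+1), f (k + p) := by
  rw [Fin.sum_univ_eq_sum_range (fun t => f (k + t))]
  refine Finset.sum_nbij' (fun i => (i - k).toNat) (fun t => k + t) ?_ ?_ ?_ ?_ ?_ <;>
    (intros; simp_all [Finset.mem_Icc, Finset.mem_range]; try omega)

lemma exists_fin_coe_eq {s : ℕ} {i : ℤ} (h₀ : 0 ≤ i) (hs : i ≤ s) :
    ∃ p : Fin (s+1), (p : ℤ) = i :=
  ⟨⟨i.toNat, by omega⟩, by simp [h₀]⟩

lemma entry_embedMat (k : ℤ) (s : ℕ) (b : Fin (s+1) → Fin (s+1) → ℂ) (i j : ℤ) :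
    entry (embedMat k s b) i j =
      ∑ p : Fin (s+1), ∑ q : Fin (s+1), if i = k + p ∧ j = k + q then b p q else 0 := by
  simp only [entry_eq_apply, embedMat, sum_apply, lp.coeFn_sum, Finset.sum_apply, smul_apply,
    smulRight_eZ_apply, lp.coeFn_smul, Pi.smul_apply, eZ_apply, smul_eq_mul]
  refine Finset.sum_congr rfl fun p _ => Finset.sum_congr rfl fun q _ => ?_
  split_ifs <;> simp_all

lemma entry_embedMat_add (k : ℤ) (s : ℕ) (b : Fin (s+1) → Fin (s+1) → ℂ) (p q : Fin (s+1)) :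
    entry (embedMat k s b) (k + p) (k + q) = b p q := by
  simp [entry_embedMat, Fin.val_inj, ite_and]

lemma entry_embedMat_eq_zero (k : ℤ) (s : ℕ) (b : Fin (s+1) → Fin (s+1) → ℂ) {i j : ℤ}
    (h : i < k ∨ k + s < i ∨ j < k ∨ k + s < j) : entry (embedMat k s b) i j = 0 := by
  rw [entry_embedMat]
  refine Finset.sum_eq_zero fun p _ => Finset.sum_eq_zero fun q _ => if_neg ?_
  have := p.isLt; have := q.isLt
  omega

lemma embedMat_sub (k : ℤ) (s : ℕ) (b b' : Fin (s+1) → Fin (s+1) → ℂ) :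
    embedMat k s b - embedMat k s b' = embedMat k s (b - b') := by
  simp only [embedMat, ← Finset.sum_sub_distrib, ← sub_smul, Pi.sub_apply]

lemma norm_embedMat_le (k : ℤ) (s : ℕ) (b : Fin (s+1) → Fin (s+1) → ℂ) :
    ‖embedMat k s b‖ ≤ ∑ p, ∑ q, ‖b p q‖ := by
  refine (norm_sum_le _ _).trans (Finset.sum_le_sum fun p _ => ?_)
  refine (norm_sum_le _ _).trans (Finset.sum_le_sum fun q _ => ?_)
  rw [norm_smul, norm_smulRight_eZ, mul_one]

lemma norm_le_norm_embedMat (k : ℤ) (s : ℕ) (b : Fin (s+1) → Fin (s+1) → ℂ) (p q : Fin (s+1)) :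
    ‖b p q‖ ≤ ‖embedMat k s b‖ :=
  entry_embedMat_add k s b p q ▸ norm_entry_le _ _ _

lemma projIcc_apply (k l : ℤ) (x : HZ) : projIcc k l x = ∑ i ∈ Finset.Icc k l, x i • eZ i := by
  simp [projIcc, inner_eZ_left]

lemma projIcc_comp_comp_projIcc (T : HZ →L[ℂ] HZ) (k : ℤ) (s : ℕ) :
    projIcc k (k + s) ∘L T ∘L projIcc k (k + s) = embedMat k s (block (entry T) k s) := by
  ext1 x
  simp only [ContinuousLinearMap.comp_apply, projIcc_apply, map_sum, map_smul, sum_Icc_eq_sum_fin,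
    embedMat, sum_apply, smul_apply, smulRight_eZ_apply, Finset.smul_sum, smul_smul, block,
    entry_eq_apply]
  rw [Finset.sum_comm]
  simp only [mul_comm]

def IsBandMatrix (n m : ℤ) (U : ℤ → Set ℂ) (c : ℤ → ℤ → ℂ) : Prop :=
  ∀ i j, (n ≤ i - j → i - j ≤ m → c i j ∈ U (i - j)) ∧ (¬(n ≤ i - j ∧ i - j ≤ m) → c i j = 0)

section Band

variable {n m : ℤ} {U : ℤ → Set ℂ}

lemma mem_Mset_iff {A : HZ →L[ℂ] HZ} : A ∈ Mset n m U ↔ IsBandMatrix n m U (entry A) := by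
  refine ⟨fun hA i j => ?_, fun hA i k => ?_⟩
  · simpa using hA j (i - j)
  · simpa using hA (i + k) i

lemma IsBandMatrix.comp_add {c : ℤ → ℤ → ℂ} (hc : IsBandMatrix n m U c) (d : ℤ) :
    IsBandMatrix n m U (fun i j => c (d + i) (d + j)) := by
  intro i j
  simpa using hc (d + i) (d + j)

lemma IsBandMatrix.ite {c₁ c₂ : ℤ → ℤ → ℂ} (P : ℤ → ℤ → Prop) [∀ i j, Decidable (P i j)]
    (h₁ : IsBandMatrix n m U c₁) (h₂ : IsBandMatrix n m U c₂) :
    IsBandMatrix n m U (fun i j => if P i j then c₁ i j else c₂ i j) := by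
  intro i j
  by_cases hP : P i j
  · simpa only [if_pos hP] using h₁ i j
  · simpa only [if_neg hP] using h₂ i j

lemma IsBandMatrix.finPattern_block {c : ℤ → ℤ → ℂ} (hc : IsBandMatrix n m U c) (k : ℤ) (s : ℕ) :
    finPattern n m U s (block c k s) := by
  intro p q
  simpa [block] using hc (k + p) (k + q)

lemma Vshift_conj_mem_Mset {A : HZ →L[ℂ] HZ} (hA : A ∈ Mset n m U) (h : ℤ) :
    Vshift (-h) ∘L A ∘L Vshift h ∈ Mset n m U := by
  rw [mem_Mset_iff] at hA ⊢
  convert hA.comp_add h using 1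
  exact funext₂ (entry_Vshift_conj A h)

lemma entry_sum_smul_Vshift (u : ℤ → ℂ) (i j : ℤ) :
    entry (∑ k ∈ Finset.Icc n m, u k • Vshift k) i j =
      if n ≤ i - j ∧ i - j ≤ m then u (i - j) else 0 := by
  simp only [entry_eq_apply, sum_apply, smul_apply, Vshift_eZ, lp.coeFn_sum, Finset.sum_apply,
    lp.coeFn_smul, Pi.smul_apply, eZ_apply, smul_eq_mul, mul_ite, mul_one, mul_zero]
  simp only [eq_comm (a := i), ← eq_sub_iff_add_eq', Finset.sum_ite_eq', Finset.mem_Icc]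

lemma Mset_nonempty (hU : ∀ k, n ≤ k → k ≤ m → (U k).Nonempty) : (Mset n m U).Nonempty := by
  choose! u hu using hU
  refine ⟨∑ k ∈ Finset.Icc n m, u k • Vshift k, mem_Mset_iff.2 fun i j => ?_⟩
  rw [entry_sum_smul_Vshift]
  exact ⟨fun h₁ h₂ => by simpa [h₁, h₂] using hu _ h₁ h₂, fun h => if_neg h⟩


lemma tendsto_apply_of_tendsto_apply_eZ {ι E : Type*} [NormedAddCommGroup E] [NormedSpace ℂ E]
    {l : Filter ι} {T : ι → HZ →L[ℂ] E} {B : HZ →L[ℂ] E} {C : ℝ} (hC : ∀ k, ‖T k‖ ≤ C)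
    (hT : ∀ j, Tendsto (fun k => T k (eZ j)) l (𝓝 (B (eZ j)))) (x : HZ) :
    Tendsto (fun k => T k x) l (𝓝 (B x)) := by
  have hequi : Equicontinuous ((↑) ∘ T) :=
    ((NormedSpace.equicontinuous_TFAE T).out 5 1).1 (⟨C, hC⟩ : ∃ C, ∀ k, ‖T k‖ ≤ C)
  refine (hequi.isClosed_setOfPred_tendsto B.continuous).mem_of_tendsto
    (hasSum_eZ x) (Eventually.of_forall fun F => ?_)
  simp only [Set.mem_ofPred_eq, Function.comp_apply, map_sum, map_smul]
  exact tendsto_finsetSum F fun j _ => (hT j).const_smul (x j)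

lemma apply_eZ_eq_sum_entry {T : HZ →L[ℂ] HZ} (hT : T ∈ Mset n m U)
    (j : ℤ) : T (eZ j) = ∑ i ∈ Finset.Icc (j + n) (j + m), entry T i j • eZ i := by
  simp only [entry_eq_apply]
  refine (hasSum_eZ (T (eZ j))).unique (hasSum_sum_of_ne_finset_zero fun i hi => ?_)
  rw [← entry_eq_apply, ((mem_Mset_iff.1 hT) i j).2 (by rw [Finset.mem_Icc] at hi; omega),
    zero_smul]

lemma tendsto_apply_of_tendsto_entry {T : ℕ → HZ →L[ℂ] HZ}
    {B : HZ →L[ℂ] HZ} {C : ℝ} (hT : ∀ k, T k ∈ Mset n m U) (hB : B ∈ Mset n m U)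
    (hC : ∀ k, ‖T k‖ ≤ C)
    (hentry : ∀ i j, Tendsto (fun k => entry (T k) i j) atTop (𝓝 (entry B i j))) (x : HZ) :
    Tendsto (fun k => T k x) atTop (𝓝 (B x)) := by
  refine tendsto_apply_of_tendsto_apply_eZ hC (fun j => ?_) x
  simp only [apply_eZ_eq_sum_entry (hT _), apply_eZ_eq_sum_entry hB]
  exact tendsto_finsetSum _ fun i _ => (hentry i j).smul_const (eZ i)

lemma tendsto_entry_of_tendsto_Vshift_conj {A B : HZ →L[ℂ] HZ} {h : ℕ → ℤ}
    (hAB : ∀ x, Tendsto (fun k => Vshift (-(h k)) (A (Vshift (h k) x))) atTop (𝓝 (B x)))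
    (i j : ℤ) : Tendsto (fun k => entry A (h k + i) (h k + j)) atTop (𝓝 (entry B i j)) := by
  simp only [← entry_Vshift_conj]
  exact tendsto_const_nhds.inner (hAB (eZ j))

variable {A : HZ →L[ℂ] HZ}

lemma opSpec_subset_Mset (hU : ∀ k, n ≤ k → k ≤ m → IsClosed (U k)) (hA : A ∈ Mset n m U) :
    opSpec A ⊆ Mset n m U := by
  rintro B ⟨h, -, hAB⟩
  rw [mem_Mset_iff] at hA ⊢
  intro i j
  have hlim := tendsto_entry_of_tendsto_Vshift_conj hAB i j
  have hband k := hA (h k + i) (h k + j)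
  simp only [add_sub_add_left_eq_sub] at hband
  refine ⟨fun h₁ h₂ => (hU _ h₁ h₂).mem_of_tendsto hlim (.of_forall fun k => (hband k).1 h₁ h₂),
    fun hij => tendsto_nhds_unique hlim ?_⟩
  simpa only [(hband _).2 hij] using tendsto_const_nhds

lemma exists_mem_Mset_block_eq (hU : ∀ k, n ≤ k → k ≤ m → (U k).Nonempty) {s : ℕ}
    {b : Fin (s+1) → Fin (s+1) → ℂ} (hb : finPattern n m U s b) :
    ∃ B ∈ Mset n m U, block (entry B) 0 s = b := by
  obtain ⟨L, hL⟩ := Mset_nonempty hU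
  set B := L + embedMat 0 s (b - block (entry L) 0 s)
  have hB_block (p q : Fin (s+1)) : entry B p q = b p q := by
    have := entry_embedMat_add 0 s (b - block (entry L) 0 s) p q
    simp only [zero_add] at this
    simp [B, entry_add, this, block]
  have hB_outside {i j : ℤ} (h : i < 0 ∨ s < i ∨ j < 0 ∨ s < j) : entry B i j = entry L i j := by
    rw [entry_add, entry_embedMat_eq_zero 0 s _ (by simpa using h), add_zero]
  refine ⟨B, mem_Mset_iff.2 fun i j => ?_, funext₂ fun p q => by simpa [block] using hB_block p q⟩
  by_cases hw : 0 ≤ i ∧ i ≤ s ∧ 0 ≤ j ∧ j ≤ s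
  · obtain ⟨p, rfl⟩ := exists_fin_coe_eq hw.1 hw.2.1
    obtain ⟨q, rfl⟩ := exists_fin_coe_eq hw.2.2.1 hw.2.2.2
    rw [hB_block]
    exact hb p q
  · rw [hB_outside (by omega)]
    exact mem_Mset_iff.1 hL i j

lemma mem_PsiE_of_Mset_subset_opSpec (hU : ∀ k, n ≤ k → k ≤ m → (U k).Nonempty)
    (hA : A ∈ Mset n m U) (hsub : Mset n m U ⊆ opSpec A) : A ∈ PsiE n m U := by
  refine ⟨hA, fun ε hε s b hb => ?_⟩
  obtain ⟨B, hB, rfl⟩ := exists_mem_Mset_block_eq hU hb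
  obtain ⟨h, -, hAB⟩ := hsub hB
  have hlim : Tendsto (fun k => ∑ p, ∑ q, ‖(block (entry A) (h k) s - block (entry B) 0 s) p q‖)
      atTop (𝓝 0) := by
    simp only [Pi.sub_apply, block, zero_add]
    simpa using tendsto_finsetSum (Finset.univ : Finset (Fin (s+1))) fun p _ =>
      tendsto_finsetSum (Finset.univ : Finset (Fin (s+1))) fun q _ =>
        ((tendsto_entry_of_tendsto_Vshift_conj hAB p q).sub_const (entry B p q)).norm
  obtain ⟨k, hk⟩ := (hlim.eventually (gt_mem_nhds hε)).exists
  refine ⟨h k, ?_⟩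
  rw [projIcc_comp_comp_projIcc, embedMat_sub]
  exact (norm_embedMat_le _ _ _).trans hk.le

lemma exists_near_translate_of_mem_PsiE (hA : A ∈ PsiE n m U) {c : ℤ → ℤ → ℂ}
    (hc : IsBandMatrix n m U c) (N : ℕ) {ε : ℝ} (hε : 0 < ε) :
    ∃ k : ℤ, ∀ i j : ℤ, |i| ≤ N → |j| ≤ N → ‖entry A (k + i) (k + j) - c i j‖ ≤ ε := by
  obtain ⟨k, hk⟩ := hA.2 ε hε (2 * N) (block c (-N) (2 * N)) (hc.finPattern_block _ _)
  rw [projIcc_comp_comp_projIcc, embedMat_sub] at hk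
  refine ⟨k + N, fun i j hi hj => ?_⟩
  rw [abs_le] at hi hj
  obtain ⟨p, hp⟩ := exists_fin_coe_eq (s := 2 * N) (i := N + i) (by omega) (by push_cast; omega)
  obtain ⟨q, hq⟩ := exists_fin_coe_eq (s := 2 * N) (i := N + j) (by omega) (by push_cast; omega)
  have := (norm_le_norm_embedMat _ _ _ p q).trans hk
  simp only [Pi.sub_apply, block, hp, hq, neg_add_cancel_left] at this
  simpa only [add_assoc] using this

lemma exists_far_near_translate_of_mem_PsiE (hA : A ∈ PsiE n m U) {c : ℤ → ℤ → ℂ}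
    (hc : IsBandMatrix n m U c) (N R : ℕ) {ε : ℝ} (hε : 0 < ε) :
    ∃ k : ℤ, R ≤ |k| ∧
      ∀ i j : ℤ, |i| ≤ N → |j| ≤ N → ‖entry A (k + i) (k + j) - c i j‖ ≤ ε := by
  -- A near-copy of `c` glued to its translate by `d` yields two near-copies of `c`, `d` apart.
  set d : ℕ := 2 * (N + R) + 1
  obtain ⟨k, hk⟩ := exists_near_translate_of_mem_PsiE hA
    (hc.ite (fun i j => |i| ≤ N ∧ |j| ≤ N) (hc.comp_add (-d))) (N + d) hε
  by_cases hR : (R : ℤ) ≤ |k|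
  · refine ⟨k, hR, fun i j hi hj => ?_⟩
    simpa [hi, hj] using hk i j (by push_cast; linarith) (by push_cast; linarith)
  · refine ⟨k + d, ?_, fun i j hi hj => ?_⟩
    · rw [not_le, abs_lt] at hR
      exact le_trans (by omega) (le_abs_self _)
    · rw [abs_le] at hi hj
      have hfar {i : ℤ} (hi : -N ≤ i ∧ i ≤ N) : ¬|d + i| ≤ N := by rw [abs_le]; omega
      simpa [hfar hi, hfar hj, add_assoc] using
        hk (d + i) (d + j) (by rw [abs_le]; push_cast; omega) (by rw [abs_le]; push_cast; omega)

lemma Mset_subset_opSpec (hA : A ∈ PsiE n m U) : Mset n m U ⊆ opSpec A := by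
  intro B hB
  choose h hfar hnear using fun N : ℕ => exists_far_near_translate_of_mem_PsiE hA
    (mem_Mset_iff.1 hB) N N (by positivity : (0 : ℝ) < 1 / (N + 1))
  refine ⟨h, tendsto_atTop_mono hfar tendsto_natCast_atTop_atTop,
    tendsto_apply_of_tendsto_entry (fun k => Vshift_conj_mem_Mset hA.1 (h k)) hB
      (fun k => norm_Vshift_conj_le A (h k)) (fun i j => ?_)⟩
  simp only [entry_Vshift_conj]
  rw [tendsto_iff_norm_sub_tendsto_zero]
  refine squeeze_zero' (.of_forall fun _ => norm_nonneg _) ?_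
    tendsto_one_div_add_atTop_nhds_zero_nat
  filter_upwards [eventually_ge_atTop (i.natAbs + j.natAbs)] with N hN
  exact hnear N i j (by rw [abs_le]; omega) (by rw [abs_le]; omega)

end Band

theorem pseudoErgodic_iff_opSpec_eq_Mset_general
    (n m : ℤ) (U : ℤ → Set ℂ)
    (hU : ∀ k : ℤ, n ≤ k → k ≤ m → (U k).Nonempty ∧ IsCompact (U k))
    (A : HZ →L[ℂ] HZ) (hA : A ∈ Mset n m U) :
    A ∈ PsiE n m U ↔ opSpec A = Mset n m U :=
  ⟨fun hP => (opSpec_subset_Mset (fun k h₁ h₂ => (hU k h₁ h₂).2.isClosed) hA).antisymm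
      (Mset_subset_opSpec hP),
    fun h => mem_PsiE_of_Mset_subset_opSpec (fun k h₁ h₂ => (hU k h₁ h₂).1) hA h.ge⟩

/-- `A ∈ ΨE(U_n, …, U_m)` if and only if `σ^op(A) = M(U_n, …, U_m)`. -/
theorem pseudoErgodic_iff_opSpec_eq_Mset
    (n m : ℤ) (hnm : n ≤ m) (U : ℤ → Set ℂ)
    (hU : ∀ k : ℤ, n ≤ k → k ≤ m → (U k).Nonempty ∧ IsCompact (U k))
    (A : HZ →L[ℂ] HZ) (hA : A ∈ Mset n m U) :
    A ∈ PsiE n m U ↔ opSpec A = Mset n m U :=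
  pseudoErgodic_iff_opSpec_eq_Mset_general n m U hU A hA
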